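/- Every x ∈ [0,1] admits exactly one ternary expansion x = Σ_{n=1}^∞ u_n 3^{-n} with (u_n) ∈ Θ, where Θ is the set of sequences in {0,2,−2}^ℕ whose first nonzero entry is not −2 and which do not end with 2(−2)^∞ or (−2)2^∞. -/

import Mathlib

/-- Membership in Θ: values in {0,2,-2}, the first nonzero entry is not -2,
and the sequence does not end with 2(-2)^∞ or (-2)2^∞. -/
def inTheta (u : ℕ → ℝ) : Prop :=
  (∀ n, u n = 0 ∨ u n = 2 ∨ u n = -2) ∧
  (∀ n, (∀ k < n, u k = 0) → u n ≠ -2) ∧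
  (¬ ∃ k, u k = 2 ∧ ∀ j > k, u j = -2) ∧
  (¬ ∃ k, u k = -2 ∧ ∀ j > k, u j = 2)


open Filter Finset

noncomputable def Dg (x : ℝ) : ℝ := if 1/3 < x then 2 else if x < -(1/3) then -2 else 0
noncomputable def Tg (x : ℝ) : ℝ := 3 * x - Dg x

def isDig (v : ℕ → ℝ) : Prop := ∀ n, v n = 0 ∨ v n = 2 ∨ v n = -2

lemma Dg_mem (x : ℝ) : Dg x = 0 ∨ Dg x = 2 ∨ Dg x = -2 := by
  unfold Dg; split_ifs <;> simp

lemma dig_abs {v : ℕ → ℝ} (hv : isDig v) (n : ℕ) : |v n| ≤ 2 := by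
  rcases hv n with h | h | h <;> rw [h] <;> norm_num

lemma summable_dig {v : ℕ → ℝ} (hv : isDig v) :
    Summable (fun n => v n / 3 ^ (n+1)) := by
  apply Summable.of_norm_bounded (g := fun n => 2 * (1/3 : ℝ) ^ n)
    ((summable_geometric_of_lt_one (by norm_num) (by norm_num)).mul_left 2)
  intro n
  rw [Real.norm_eq_abs, abs_div, abs_of_nonneg (by positivity : (0:ℝ) ≤ 3 ^ (n+1))]
  rw [div_le_iff₀ (by positivity)]
  calc |v n| ≤ 2 := dig_abs hv n
    _ ≤ 2 * ((1/3:ℝ)^n * 3^(n+1)) := by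
        rw [pow_succ]
        have : (1/3:ℝ)^n * (3^n * 3) = 3 := by
          rw [div_pow, one_pow, div_mul_eq_mul_div, mul_comm]
          field_simp
        rw [this]; norm_num
    _ = 2 * (1/3:ℝ)^n * 3^(n+1) := by ring

lemma S_const (c : ℝ) : (∑' n : ℕ, c / 3 ^ (n+1)) = c / 2 := by
  have h : ∀ n : ℕ, c / 3 ^ (n+1) = (c/3) * (1/3 : ℝ) ^ n := by
    intro n
    rw [pow_succ, div_pow, one_pow]
    ring
  rw [tsum_congr h, tsum_mul_left, tsum_geometric_of_lt_one (by norm_num) (by norm_num)]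
  norm_num
  ring

lemma S_le {v : ℕ → ℝ} (hv : isDig v) : (∑' n : ℕ, v n / 3 ^ (n+1)) ≤ 1 := by
  have hc : Summable (fun n : ℕ => (2:ℝ) / 3 ^ (n+1)) :=
    summable_dig (v := fun _ => (2:ℝ)) (fun n => by norm_num)
  have h := Summable.tsum_le_tsum (f := fun n : ℕ => v n / 3 ^ (n+1))
    (g := fun n : ℕ => (2:ℝ) / 3 ^ (n+1))
    (fun n => by
      apply div_le_div_of_nonneg_right _ (by positivity)
      rcases hv n with h | h | h <;> rw [h] <;> norm_num)
    (summable_dig hv) hc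
  calc (∑' n : ℕ, v n / 3 ^ (n+1)) ≤ ∑' n : ℕ, (2:ℝ) / 3 ^ (n+1) := h
    _ = 1 := by rw [S_const]; norm_num

lemma neg_one_le_S {v : ℕ → ℝ} (hv : isDig v) : -1 ≤ (∑' n : ℕ, v n / 3 ^ (n+1)) := by
  have hc : Summable (fun n : ℕ => (-2:ℝ) / 3 ^ (n+1)) :=
    summable_dig (v := fun _ => (-2:ℝ)) (fun n => by norm_num)
  have h := Summable.tsum_le_tsum (f := fun n : ℕ => (-2:ℝ) / 3 ^ (n+1))
    (g := fun n : ℕ => v n / 3 ^ (n+1))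
    (fun n => by
      apply div_le_div_of_nonneg_right _ (by positivity)
      rcases hv n with h | h | h <;> rw [h] <;> norm_num)
    hc (summable_dig hv)
  calc (-1:ℝ) = ∑' n : ℕ, (-2:ℝ) / 3 ^ (n+1) := by rw [S_const]; norm_num
    _ ≤ _ := h

lemma S_shift {v : ℕ → ℝ} (hv : isDig v) :
    (∑' n : ℕ, v n / 3 ^ (n+1)) = v 0 / 3 + (∑' n : ℕ, v (n+1) / 3 ^ (n+1)) / 3 := by
  rw [Summable.tsum_eq_zero_add (summable_dig hv)]
  congr 1
  · norm_num
  · rw [← tsum_div_const]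
    apply tsum_congr
    intro n
    rw [pow_succ]
    ring

lemma shift_dig {v : ℕ → ℝ} (hv : isDig v) : isDig (fun n => v (n+1)) := fun n => hv (n+1)

lemma S_eq_one_step {v : ℕ → ℝ} (hv : isDig v)
    (h : (∑' n : ℕ, v n / 3 ^ (n+1)) = 1) :
    v 0 = 2 ∧ (∑' n : ℕ, v (n+1) / 3 ^ (n+1)) = 1 := by
  have hs := S_shift hv
  have hle := S_le (shift_dig hv)
  have h0 : v 0 = 2 := by
    rcases hv 0 with h1 | h1 | h1
    · exfalso; rw [h, h1] at hs; linarith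
    · exact h1
    · exfalso; rw [h, h1] at hs; linarith
  refine ⟨h0, ?_⟩
  rw [h, h0] at hs
  linarith

lemma S_eq_neg_one_step {v : ℕ → ℝ} (hv : isDig v)
    (h : (∑' n : ℕ, v n / 3 ^ (n+1)) = -1) :
    v 0 = -2 ∧ (∑' n : ℕ, v (n+1) / 3 ^ (n+1)) = -1 := by
  have hs := S_shift hv
  have hle := neg_one_le_S (shift_dig hv)
  have h0 : v 0 = -2 := by
    rcases hv 0 with h1 | h1 | h1
    · exfalso; rw [h, h1] at hs; linarith
    · exfalso; rw [h, h1] at hs; linarith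
    · exact h1
  refine ⟨h0, ?_⟩
  rw [h, h0] at hs
  linarith

lemma S_eq_one {v : ℕ → ℝ} (hv : isDig v)
    (h : (∑' n : ℕ, v n / 3 ^ (n+1)) = 1) : ∀ n, v n = 2 := by
  intro n
  induction n generalizing v with
  | zero => exact (S_eq_one_step hv h).1
  | succ n ih =>
      exact ih (shift_dig hv) (S_eq_one_step hv h).2

lemma S_eq_neg_one {v : ℕ → ℝ} (hv : isDig v)
    (h : (∑' n : ℕ, v n / 3 ^ (n+1)) = -1) : ∀ n, v n = -2 := by
  intro n
  induction n generalizing v with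
  | zero => exact (S_eq_neg_one_step hv h).1
  | succ n ih =>
      exact ih (shift_dig hv) (S_eq_neg_one_step hv h).2

lemma Tg_mem {x : ℝ} (h : x ∈ Set.Icc (-1:ℝ) 1) : Tg x ∈ Set.Icc (-1:ℝ) 1 := by
  obtain ⟨h1, h2⟩ := h
  unfold Tg Dg
  split_ifs with ha hb <;> constructor <;> linarith

lemma iter_mem {x : ℝ} (h : x ∈ Set.Icc (-1:ℝ) 1) (n : ℕ) :
    Tg^[n] x ∈ Set.Icc (-1:ℝ) 1 := by
  induction n with
  | zero => simpa using h
  | succ n ih => rw [Function.iterate_succ_apply']; exact Tg_mem ih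

lemma partial_sum (x : ℝ) (n : ℕ) :
    ∑ k ∈ Finset.range n, Dg (Tg^[k] x) / 3 ^ (k+1) = x - Tg^[n] x / 3 ^ n := by
  induction n with
  | zero => simp
  | succ n ih =>
      rw [Finset.sum_range_succ, ih, Function.iterate_succ_apply']
      unfold Tg
      have h3 : (3:ℝ) ^ (n+1) = 3 ^ n * 3 := pow_succ 3 n
      field_simp
      ring

lemma expansion {x : ℝ} (hx : x ∈ Set.Icc (-1:ℝ) 1) :
    x = ∑' n : ℕ, Dg (Tg^[n] x) / 3 ^ (n+1) := by
  have hd : isDig (fun n => Dg (Tg^[n] x)) := fun n => Dg_mem _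
  have hs := summable_dig hd
  have ht : Tendsto (fun n => ∑ k ∈ Finset.range n, Dg (Tg^[k] x) / 3 ^ (k+1))
      atTop (nhds x) := by
    have h0 : Tendsto (fun n : ℕ => Tg^[n] x / 3 ^ n) atTop (nhds 0) := by
      apply squeeze_zero_norm (a := fun n : ℕ => (1/3 : ℝ) ^ n)
      · intro n
        rw [Real.norm_eq_abs, abs_div, abs_of_nonneg (by positivity : (0:ℝ) ≤ 3 ^ n),
          div_pow, one_pow, div_le_div_iff₀ (by positivity) (by positivity), one_mul]
        have h1 := iter_mem hx n
        have h2 : |Tg^[n] x| ≤ 1 := abs_le.2 ⟨h1.1, h1.2⟩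
        nlinarith [pow_pos (show (0:ℝ) < 3 by norm_num) n]
      · exact tendsto_pow_atTop_nhds_zero_of_lt_one (by norm_num) (by norm_num)
    have := tendsto_const_nhds (x := x) (f := atTop (α := ℕ)) |>.sub h0
    simp only [sub_zero] at this
    apply this.congr
    intro n
    rw [partial_sum]
  exact ((hs.hasSum_iff_tendsto_nat).2 ht).tsum_eq.symm

lemma Dg_eq_two {x : ℝ} (h : Dg x = 2) : 1/3 < x := by
  unfold Dg at h; split_ifs at h with h1 h2
  · exact h1
  · norm_num at h
  · norm_num at h

lemma Dg_eq_neg_two {x : ℝ} (h : Dg x = -2) : x < -(1/3) := by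
  unfold Dg at h; split_ifs at h with h1 h2
  · norm_num at h
  · exact h2
  · norm_num at h

lemma nonneg_iter {x : ℝ} (hx0 : 0 ≤ x) :
    ∀ n, (∀ k < n, Dg (Tg^[k] x) = 0) → 0 ≤ Tg^[n] x := by
  intro n
  induction n with
  | zero => intro _; simpa using hx0
  | succ n ih =>
      intro h
      have h0 := ih (fun k hk => h k (by omega))
      have key : ∀ y : ℝ, 0 ≤ y → Dg y = 0 → 0 ≤ Tg y := by
        intro y hy hD; unfold Tg; rw [hD]; linarith
      rw [Function.iterate_succ_apply']
      exact key _ h0 (h n (by omega))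

def Theta' (v : ℕ → ℝ) : Prop :=
  isDig v ∧ (¬ ∃ k, v k = 2 ∧ ∀ j > k, v j = -2) ∧ (¬ ∃ k, v k = -2 ∧ ∀ j > k, v j = 2)

lemma Theta'_shift {v : ℕ → ℝ} (h : Theta' v) : Theta' (fun n => v (n+1)) := by
  obtain ⟨h1, h2, h3⟩ := h
  refine ⟨shift_dig h1, ?_, ?_⟩
  · rintro ⟨k, hk, hall⟩
    exact h2 ⟨k+1, hk, fun j hj => by
      simpa [show j - 1 + 1 = j from by omega] using hall (j-1) (by omega)⟩
  · rintro ⟨k, hk, hall⟩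
    exact h3 ⟨k+1, hk, fun j hj => by
      simpa [show j - 1 + 1 = j from by omega] using hall (j-1) (by omega)⟩

lemma step_lemma {v : ℕ → ℝ} (h : Theta' v) :
    v 0 = Dg (∑' n : ℕ, v n / 3 ^ (n+1)) ∧
    (∑' n : ℕ, v (n+1) / 3 ^ (n+1)) = Tg (∑' n : ℕ, v n / 3 ^ (n+1)) := by
  obtain ⟨hd, h2, h3⟩ := h
  set s := ∑' n : ℕ, v n / 3 ^ (n+1) with hs_def
  set s' := ∑' n : ℕ, v (n+1) / 3 ^ (n+1) with hs'_def
  have hshift : s = v 0 / 3 + s' / 3 := S_shift hd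
  have hub : s' ≤ 1 := S_le (shift_dig hd)
  have hlb : -1 ≤ s' := neg_one_le_S (shift_dig hd)
  rcases hd 0 with h0 | h0 | h0
  · -- v 0 = 0
    have hD : Dg s = 0 := by
      unfold Dg
      rw [if_neg (by rw [hshift, h0]; push_neg; linarith),
        if_neg (by rw [hshift, h0]; push_neg; linarith)]
    constructor
    · rw [hD, h0]
    · unfold Tg; rw [hD, hshift, h0]; ring
  · -- v 0 = 2
    have hne : s' ≠ -1 := by
      intro hs1
      apply h2
      refine ⟨0, h0, fun j hj => ?_⟩
      have hall := S_eq_neg_one (shift_dig hd) hs1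
      simpa [show j - 1 + 1 = j from by omega] using hall (j-1)
    have hgt : 1/3 < s := by
      rw [hshift, h0]
      have : -1 < s' := lt_of_le_of_ne hlb (Ne.symm hne)
      linarith
    have hD : Dg s = 2 := by unfold Dg; rw [if_pos hgt]
    constructor
    · rw [hD, h0]
    · unfold Tg; rw [hD, hshift, h0]; ring
  · -- v 0 = -2
    have hne : s' ≠ 1 := by
      intro hs1
      apply h3
      refine ⟨0, h0, fun j hj => ?_⟩
      have hall := S_eq_one (shift_dig hd) hs1
      simpa [show j - 1 + 1 = j from by omega] using hall (j-1)
    have hlt : s < -(1/3) := by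
      rw [hshift, h0]
      have : s' < 1 := lt_of_le_of_ne hub hne
      linarith
    have hD : Dg s = -2 := by
      unfold Dg
      rw [if_neg (by push_neg; linarith), if_pos hlt]
    constructor
    · rw [hD, h0]
    · unfold Tg; rw [hD, hshift, h0]; ring

lemma Tg_of_two {y : ℝ} (h : Dg y = 2) : Tg y = 3 * y - 2 := by
  unfold Tg; rw [h]

lemma Tg_of_neg_two {y : ℝ} (h : Dg y = -2) : Tg y = 3 * y + 2 := by
  unfold Tg; rw [h]; ring

lemma unique_claim {v : ℕ → ℝ} (h : Theta' v) (n : ℕ) :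
    Theta' (fun k => v (n+k)) ∧
    (∑' k : ℕ, v (n+k) / 3 ^ (k+1)) = Tg^[n] (∑' k : ℕ, v k / 3 ^ (k+1)) := by
  induction n with
  | zero =>
      constructor
      · have e : (fun k => v (0+k)) = v := by funext k; rw [Nat.zero_add]
        rw [e]; exact h
      · rw [Function.iterate_zero_apply]
        exact tsum_congr (fun k => by rw [Nat.zero_add])
  | succ n ih =>
      obtain ⟨hT, hS⟩ := ih
      constructor
      · have e : (fun k => v (n+1+k)) = (fun k => v (n+(k+1))) := by
          funext k; congr 1; omega
        rw [e]; exact Theta'_shift hT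
      · rw [Function.iterate_succ_apply', ← hS, ← (step_lemma hT).2]
        exact tsum_congr (fun k => by rw [show n + 1 + k = n + (k + 1) from by omega])

theorem stmt_9 (x : ℝ) (hx : x ∈ Set.Icc (0 : ℝ) 1) :
    ∃! u : ℕ → ℝ, inTheta u ∧ x = ∑' n : ℕ, u n / 3 ^ (n + 1) := by
  have hx' : x ∈ Set.Icc (-1:ℝ) 1 := ⟨by linarith [hx.1], hx.2⟩
  refine ⟨fun n => Dg (Tg^[n] x), ⟨⟨fun n => Dg_mem _, ?_, ?_, ?_⟩, expansion hx'⟩, ?_⟩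
  · -- first nonzero not -2
    intro n hzero hneg
    have h1 := nonneg_iter hx.1 n hzero
    have h2 := Dg_eq_neg_two hneg
    linarith
  · -- no 2(-2)^∞
    rintro ⟨k, hk, hall⟩
    have hy := Dg_eq_two hk
    have hz : Tg^[k+1] x = 3 * Tg^[k] x - 2 := by
      rw [Function.iterate_succ_apply']; exact Tg_of_two hk
    have hzgt : -1 < Tg^[k+1] x := by rw [hz]; linarith
    have hexp := expansion (iter_mem hx' (k+1))
    have hall' : ∀ n : ℕ, Dg (Tg^[n] (Tg^[k+1] x)) = -2 := by
      intro n
      rw [← Function.iterate_add_apply]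
      exact hall (n + (k+1)) (by omega)
    rw [tsum_congr (fun n => by rw [hall' n])] at hexp
    rw [S_const] at hexp
    norm_num at hexp
    rw [← Function.iterate_succ_apply] at hexp
    linarith
  · -- no (-2)2^∞
    rintro ⟨k, hk, hall⟩
    have hy := Dg_eq_neg_two hk
    have hz : Tg^[k+1] x = 3 * Tg^[k] x + 2 := by
      rw [Function.iterate_succ_apply']; exact Tg_of_neg_two hk
    have hzlt : Tg^[k+1] x < 1 := by rw [hz]; linarith
    have hexp := expansion (iter_mem hx' (k+1))
    have hall' : ∀ n : ℕ, Dg (Tg^[n] (Tg^[k+1] x)) = 2 := by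
      intro n
      rw [← Function.iterate_add_apply]
      exact hall (n + (k+1)) (by omega)
    rw [tsum_congr (fun n => by rw [hall' n])] at hexp
    rw [S_const] at hexp
    norm_num at hexp
    rw [← Function.iterate_succ_apply] at hexp
    linarith
  · -- uniqueness
    rintro v ⟨⟨hd, hfirst, h2, h3⟩, hsum⟩
    have hT : Theta' v := ⟨hd, h2, h3⟩
    have hs : (∑' n : ℕ, v n / 3 ^ (n+1)) = x := hsum.symm
    funext n
    have hc := unique_claim hT n
    have h0 := (step_lemma hc.1).1
    rw [hc.2, hs] at h0
    simpa using h0
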